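/- Assume M has no duplicate atoms. Clauses S and M are respectively the side and main premise of subsumption resolution if and only if the direct SAT encoding 𝓔ᵈ_SR(S,M) is satisfiable, where 𝓔ᵈ_SR is the conjunction over Boolean variables b⁺ᵢⱼ, b⁻ᵢⱼ and a substitution σ of: positive compatibility (b⁺ᵢⱼ → Σ⁺ᵢⱼ ⊆ σ), negative compatibility (b⁻ᵢⱼ → Σ⁻ᵢⱼ ⊆ σ), existence (⋁ᵢⱼ b⁻ᵢⱼ), uniqueness (for all i ≤ i' and j < j', ¬b⁻ᵢⱼ ∨ ¬b⁻ᵢ'ⱼ'), completeness (⋀ᵢ ⋁ⱼ (b⁺ᵢⱼ ∨ b⁻ᵢⱼ)), and coherence (for all i, i', j, ¬b⁺ᵢⱼ ∨ ¬b⁻ᵢ'ⱼ). -/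

import Mathlib

/-- First-order terms over variables `V`. -/
inductive Trm (V : Type) : Type
  | var : V → Trm V
  | fn : ℕ → Trm V
  | app : Trm V → Trm V → Trm V
deriving DecidableEq

/-- Applying a (total) substitution to a term. -/
def Trm.subst {V : Type} (σ : V → Trm V) : Trm V → Trm V
  | .var x => σ x
  | .fn f => .fn f
  | .app t u => .app (t.subst σ) (u.subst σ)

/-- A first-order literal: a polarity, a predicate symbol and an argument term. -/
structure Lit (V : Type) where
  pos : Bool
  pred : ℕ
  arg : Trm V
deriving DecidableEq

/-- The complement of a literal. -/
def Lit.neg {V : Type} (l : Lit V) : Lit V := { l with pos := !l.pos }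

/-- Applying a substitution to a literal. -/
def Lit.subst {V : Type} (σ : V → Trm V) (l : Lit V) : Lit V :=
  { l with arg := l.arg.subst σ }

/-- A clause is a multiset of literals. -/
abbrev Clause (V : Type) := Multiset (Lit V)

/-- Applying a substitution to a clause. -/
def Clause.subst {V : Type} (σ : V → Trm V) (C : Clause V) : Clause V :=
  C.map (Lit.subst σ)

/-- `S` subsumes `M`: some substitution maps `S` to a sub-multiset of `M`. -/
def Subsumes {V : Type} (S M : Clause V) : Prop :=
  ∃ σ : V → Trm V, Clause.subst σ S ≤ M

/-- `S` and `M` are side and main premises of subsumption resolution: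
there are `σ`, a nonempty `S' ⊆ S` and `m' ∈ M` with `σ(S') = {¬m'}` and
`σ(S \ S') ⊆ M \ {m'}`. -/
def SubRes {V : Type} [DecidableEq V] (S M : Clause V) : Prop :=
  ∃ (σ : V → Trm V) (S' : Clause V) (m' : Lit V),
    S' ≤ S ∧ S' ≠ 0 ∧ m' ∈ M ∧
    (∀ l ∈ S', Lit.subst σ l = m'.neg) ∧
    (∀ l ∈ S - S', Lit.subst σ l ∈ M.erase m')

/-- Partial substitutions. -/
abbrev PSub (V : Type) := V → Option (Trm V)

/-- Partial application of a partial substitution to a term. -/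
def Trm.psubst {V : Type} (θ : PSub V) : Trm V → Option (Trm V)
  | .var x => θ x
  | .fn f => some (.fn f)
  | .app t u => (t.psubst θ).bind fun t' => (u.psubst θ).map fun u' => .app t' u'

/-- Partial application of a partial substitution to a literal. -/
def Lit.psubst {V : Type} (θ : PSub V) (l : Lit V) : Option (Lit V) :=
  (l.arg.psubst θ).map fun t => { l with arg := t }

/-- `θ ⊆ σ`: the total substitution `σ` extends the partial substitution `θ`. -/
def PSub.le {V : Type} (θ : PSub V) (σ : V → Trm V) : Prop :=
  ∀ x t, θ x = some t → σ x = t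

/-- The clause with literals `s 0, …, s (k-1)`. -/
def clauseOfFn {V : Type} {k : ℕ} (s : Fin k → Lit V) : Clause V :=
  (List.ofFn s : List (Lit V))

/-- The indexed clause `m` has no duplicate literals. -/
def NoDupIdx {V : Type} {n : ℕ} (m : Fin n → Lit V) : Prop :=
  ∀ j j' : Fin n, m j = m j' → j = j'

/-- The indexed clause `m` has no duplicate atoms: no two (distinct) literals are
equal or complementary. -/
def NoDupAtomsIdx {V : Type} {n : ℕ} (m : Fin n → Lit V) : Prop :=
  (∀ j j' : Fin n, m j = m j' → j = j') ∧ (∀ j j' : Fin n, m j ≠ (m j').neg)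

/-- `Sp` is the family of positive matchers `Σ⁺ᵢⱼ`: `Sp i j = some θ` exactly when a
substitution matching `sᵢ` to `mⱼ` exists, in which case `θ` is such a (partial)
matcher and every total match is an extension of it. -/
def IsMatcherFamilyPos {V : Type} {k n : ℕ} (s : Fin k → Lit V) (m : Fin n → Lit V)
    (Sp : Fin k → Fin n → Option (PSub V)) : Prop :=
  (∀ i j θ, Sp i j = some θ → Lit.psubst θ (s i) = some (m j)) ∧
  (∀ i j (σ : V → Trm V), Lit.subst σ (s i) = m j → ∃ θ, Sp i j = some θ ∧ PSub.le θ σ)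

/-- `Sn` is the family of negative matchers `Σ⁻ᵢⱼ` (matching `sᵢ` to `¬mⱼ`). -/
def IsMatcherFamilyNeg {V : Type} {k n : ℕ} (s : Fin k → Lit V) (m : Fin n → Lit V)
    (Sn : Fin k → Fin n → Option (PSub V)) : Prop :=
  (∀ i j θ, Sn i j = some θ → Lit.psubst θ (s i) = some ((m j).neg)) ∧
  (∀ i j (σ : V → Trm V), Lit.subst σ (s i) = (m j).neg → ∃ θ, Sn i j = some θ ∧ PSub.le θ σ)

/-- The (predicate, polarity) header of a literal. -/
def Lit.header {V : Type} (l : Lit V) : ℕ × Bool := (l.pred, l.pos)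

/-- Satisfiability of the direct SAT encoding `𝓔ᵈ_SR(S,M)` of subsumption resolution. -/
def DirectSRSat {V : Type} {k n : ℕ} (s : Fin k → Lit V) (m : Fin n → Lit V)
    (Sp Sn : Fin k → Fin n → Option (PSub V)) : Prop :=
  ∃ (σ : V → Trm V) (bp bn : Fin k → Fin n → Bool),
    -- positive compatibility
    (∀ i j, bp i j = true → ∃ θ, Sp i j = some θ ∧ PSub.le θ σ) ∧
    -- negative compatibility
    (∀ i j, bn i j = true → ∃ θ, Sn i j = some θ ∧ PSub.le θ σ) ∧
    -- existence
    (∃ i j, bn i j = true) ∧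
    -- uniqueness
    (∀ i j i' j', bn i j = true → bn i' j' = true → j = j') ∧
    -- completeness
    (∀ i, ∃ j, bp i j = true ∨ bn i j = true) ∧
    -- coherence
    (∀ i i' j, ¬(bp i j = true ∧ bn i' j = true))

/-!
A witness of subsumption resolution amounts to `σ`, `j₀` and the index set `I` of the side
literals that `σ` sends to `¬mⱼ₀`; every other side literal must hit some `mⱼ` with
`j ≠ j₀`, which (as `M` has no duplicate literals) is exactly membership in `M \ {mⱼ₀}`.
The variables `b⁻ᵢⱼ₀` of the encoding record `I`, the `b⁺ᵢⱼ` record the matches outside `I`,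
and the matcher families turn "`σ` extends `Σ±ᵢⱼ`" into "`σ` maps `sᵢ` to `±mⱼ`".
-/

theorem Trm.subst_eq_of_psubst_eq_some {V : Type} {θ : PSub V} {σ : V → Trm V}
    (h : PSub.le θ σ) : ∀ {t t' : Trm V}, t.psubst θ = some t' → t.subst σ = t'
  | .var x, t', ht => h x t' ht
  | .fn f, t', ht => by simp_all [Trm.psubst, Trm.subst]
  | .app a b, t', ht => by
      simp only [Trm.psubst, Option.bind_eq_some_iff, Option.map_eq_some_iff] at ht
      obtain ⟨a', ha, b', hb, rfl⟩ := ht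
      simp [Trm.subst, subst_eq_of_psubst_eq_some h ha, subst_eq_of_psubst_eq_some h hb]

theorem Lit.subst_eq_of_psubst_eq_some {V : Type} {θ : PSub V} {σ : V → Trm V}
    (h : PSub.le θ σ) {l l' : Lit V} (hl : l.psubst θ = some l') : l.subst σ = l' := by
  simp only [Lit.psubst, Option.map_eq_some_iff] at hl
  obtain ⟨t, ht, rfl⟩ := hl
  simp [Lit.subst, Trm.subst_eq_of_psubst_eq_some h ht]

section MatcherFamily

variable {V : Type} {k n : ℕ} {s : Fin k → Lit V} {m : Fin n → Lit V}
  {Sp Sn : Fin k → Fin n → Option (PSub V)}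

theorem IsMatcherFamilyPos.subst_eq_iff (hSp : IsMatcherFamilyPos s m Sp) {σ : V → Trm V}
    {i : Fin k} {j : Fin n} : (s i).subst σ = m j ↔ ∃ θ, Sp i j = some θ ∧ PSub.le θ σ :=
  ⟨hSp.2 i j σ, fun ⟨θ, hθ, hle⟩ => Lit.subst_eq_of_psubst_eq_some hle (hSp.1 i j θ hθ)⟩

theorem IsMatcherFamilyNeg.subst_eq_iff (hSn : IsMatcherFamilyNeg s m Sn) {σ : V → Trm V}
    {i : Fin k} {j : Fin n} : (s i).subst σ = (m j).neg ↔ ∃ θ, Sn i j = some θ ∧ PSub.le θ σ :=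
  ⟨hSn.2 i j σ, fun ⟨θ, hθ, hle⟩ => Lit.subst_eq_of_psubst_eq_some hle (hSn.1 i j θ hθ)⟩

end MatcherFamily

/-- Subsumption resolution on indexed clauses: `P` selects the indices of `S'` and `j₀` the
index of `m'`. -/
def IndexedSubRes {V : Type} {k n : ℕ} (s : Fin k → Lit V) (m : Fin n → Lit V) : Prop :=
  ∃ (σ : V → Trm V) (j₀ : Fin n) (P : Fin k → Prop),
    (∃ i, P i) ∧ (∀ i, P i → (s i).subst σ = (m j₀).neg) ∧
    (∀ i, ¬P i → ∃ j ≠ j₀, (s i).subst σ = m j)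

section Indexed

variable {V : Type} {k n : ℕ} {s : Fin k → Lit V} {m : Fin n → Lit V}

theorem clauseOfFn_eq_map_univ (s : Fin k → Lit V) :
    clauseOfFn s = (Finset.univ.val : Multiset (Fin k)).map s :=
  (Fin.univ_val_map s).symm

theorem mem_clauseOfFn {l : Lit V} : l ∈ clauseOfFn s ↔ ∃ i, s i = l := by
  simp [clauseOfFn_eq_map_univ]

theorem nodup_clauseOfFn (hm : Function.Injective m) : (clauseOfFn m).Nodup :=
  Multiset.coe_nodup.2 (List.nodup_ofFn.2 hm)

theorem mem_erase_clauseOfFn_iff [DecidableEq V] (hm : Function.Injective m) {l : Lit V}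
    {j₀ : Fin n} : l ∈ (clauseOfFn m).erase (m j₀) ↔ ∃ j ≠ j₀, m j = l := by
  rw [(nodup_clauseOfFn hm).mem_erase_iff, mem_clauseOfFn]
  constructor
  · rintro ⟨hne, j, rfl⟩
    exact ⟨j, fun h => hne (congrArg m h), rfl⟩
  · rintro ⟨j, hj, rfl⟩
    exact ⟨hm.ne hj, j, rfl⟩

theorem SubRes.indexedSubRes [DecidableEq V] (hm : Function.Injective m)
    (h : SubRes (clauseOfFn s) (clauseOfFn m)) : IndexedSubRes s m := by
  obtain ⟨σ, S', m', hS'le, hS'ne, hm', hS', hrest⟩ := h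
  obtain ⟨j₀, rfl⟩ := mem_clauseOfFn.1 hm'
  refine ⟨σ, j₀, fun i => s i ∈ S', ?_, fun i hi => hS' _ hi, fun i hi => ?_⟩
  · obtain ⟨l, hl⟩ := Multiset.exists_mem_of_ne_zero hS'ne
    obtain ⟨i, rfl⟩ := mem_clauseOfFn.1 (Multiset.mem_of_le hS'le hl)
    exact ⟨i, hl⟩
  · have hsub : s i ∈ clauseOfFn s - S' := by
      rw [Multiset.mem_sub, Multiset.count_eq_zero_of_notMem hi, Multiset.count_pos]
      exact mem_clauseOfFn.2 ⟨i, rfl⟩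
    obtain ⟨j, hj, hmj⟩ := (mem_erase_clauseOfFn_iff hm).1 (hrest _ hsub)
    exact ⟨j, hj, hmj.symm⟩

theorem IndexedSubRes.subRes [DecidableEq V] (hm : Function.Injective m)
    (h : IndexedSubRes s m) : SubRes (clauseOfFn s) (clauseOfFn m) := by
  classical
  obtain ⟨σ, j₀, P, ⟨i₀, hi₀⟩, hP, hnP⟩ := h
  set U : Multiset (Fin k) := Finset.univ.val
  have hsplit : clauseOfFn s - (U.filter P).map s = (U.filter (¬P ·)).map s := by
    rw [clauseOfFn_eq_map_univ, ← Multiset.filter_add_not P Finset.univ.val, Multiset.map_add,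
      add_tsub_cancel_left]
  refine ⟨σ, (U.filter P).map s, m j₀, ?_, ?_, mem_clauseOfFn.2 ⟨j₀, rfl⟩, ?_, ?_⟩
  · rw [clauseOfFn_eq_map_univ]
    exact Multiset.map_le_map (Multiset.filter_le P U)
  · simpa [Multiset.eq_zero_iff_forall_notMem, U] using ⟨i₀, hi₀⟩
  · simp only [Multiset.mem_map, Multiset.mem_filter]
    rintro _ ⟨i, ⟨-, hi⟩, rfl⟩
    exact hP i hi
  · rw [hsplit]
    simp only [Multiset.mem_map, Multiset.mem_filter]
    rintro _ ⟨i, ⟨-, hi⟩, rfl⟩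
    obtain ⟨j, hj, hsj⟩ := hnP i hi
    exact (mem_erase_clauseOfFn_iff hm).2 ⟨j, hj, hsj.symm⟩

theorem subRes_clauseOfFn_iff [DecidableEq V] (hm : Function.Injective m) :
    SubRes (clauseOfFn s) (clauseOfFn m) ↔ IndexedSubRes s m :=
  ⟨SubRes.indexedSubRes hm, IndexedSubRes.subRes hm⟩

end Indexed

section Encoding

variable {V : Type} {k n : ℕ} {s : Fin k → Lit V} {m : Fin n → Lit V}
  {Sp Sn : Fin k → Fin n → Option (PSub V)}

theorem IndexedSubRes.directSRSat (hSp : IsMatcherFamilyPos s m Sp)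
    (hSn : IsMatcherFamilyNeg s m Sn) (h : IndexedSubRes s m) : DirectSRSat s m Sp Sn := by
  classical
  obtain ⟨σ, j₀, P, ⟨i₀, hi₀⟩, hP, hnP⟩ := h
  refine ⟨σ, fun i j => decide (¬P i ∧ j ≠ j₀ ∧ (s i).subst σ = m j),
    fun i j => decide (P i ∧ j = j₀), ?_, ?_, ⟨i₀, j₀, by simpa using hi₀⟩, ?_, ?_, ?_⟩
  · intro i j hb
    exact hSp.subst_eq_iff.1 (of_decide_eq_true hb).2.2
  · intro i j hb
    obtain ⟨hi, rfl⟩ := of_decide_eq_true hb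
    exact hSn.subst_eq_iff.1 (hP i hi)
  · intro i j i' j' hb hb'
    rw [(of_decide_eq_true hb).2, (of_decide_eq_true hb').2]
  · intro i
    by_cases hi : P i
    · exact ⟨j₀, Or.inr (by simpa using hi)⟩
    · obtain ⟨j, hj, hsj⟩ := hnP i hi
      exact ⟨j, Or.inl (by simpa using ⟨hi, hj, hsj⟩)⟩
  · rintro i i' j ⟨hb, hb'⟩
    exact (of_decide_eq_true hb).2.1 (of_decide_eq_true hb').2

theorem DirectSRSat.indexedSubRes (hSp : IsMatcherFamilyPos s m Sp)
    (hSn : IsMatcherFamilyNeg s m Sn) (h : DirectSRSat s m Sp Sn) : IndexedSubRes s m := by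
  obtain ⟨σ, bp, bn, hpc, hnc, ⟨i₀, j₀, hb₀⟩, huniq, hcompl, hcoh⟩ := h
  refine ⟨σ, j₀, fun i => bn i j₀ = true, ⟨i₀, hb₀⟩,
    fun i hi => hSn.subst_eq_iff.2 (hnc i j₀ hi), fun i hi => ?_⟩
  obtain ⟨j, hj⟩ := hcompl i
  have hbp : bp i j = true := hj.resolve_right fun hbn => hi (huniq i j i₀ j₀ hbn hb₀ ▸ hbn)
  refine ⟨j, ?_, hSp.subst_eq_iff.2 (hpc i j hbp)⟩
  rintro rfl
  exact hcoh i i₀ j ⟨hbp, hb₀⟩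

theorem indexedSubRes_iff_directSRSat (hSp : IsMatcherFamilyPos s m Sp)
    (hSn : IsMatcherFamilyNeg s m Sn) : IndexedSubRes s m ↔ DirectSRSat s m Sp Sn :=
  ⟨IndexedSubRes.directSRSat hSp hSn, DirectSRSat.indexedSubRes hSp hSn⟩

end Encoding

/-- Soundness of the direct SAT encoding: with `M` having no duplicate atoms,
`S`, `M` are side and main premises of subsumption resolution iff
`𝓔ᵈ_SR(S,M)` is satisfiable. -/
theorem stmt4 {V : Type} [DecidableEq V] {k n : ℕ} (s : Fin k → Lit V) (m : Fin n → Lit V)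
    (hM : NoDupAtomsIdx m)
    (Sp Sn : Fin k → Fin n → Option (PSub V))
    (hSp : IsMatcherFamilyPos s m Sp) (hSn : IsMatcherFamilyNeg s m Sn) :
    SubRes (clauseOfFn s) (clauseOfFn m) ↔ DirectSRSat s m Sp Sn :=
  (subRes_clauseOfFn_iff hM.1).trans (indexedSubRes_iff_directSRSat hSp hSn)
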